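/- Let ℓ be a prime of the form ℓ = s^6 + 27 t^2 for integers s, t with s ≠ 0. Then the point (3ℓ/s^2, 27 t ℓ / s^3) lies on the elliptic curve y^2 = x^3 - 27 ℓ^2 and has infinite order, so this curve has positive Mordell–Weil rank over Q; consequently 2ℓ is a sum of two rational cubes. -/

import Mathlib

/-!
Doubling `P = (3ℓ/s², 27tℓ/s³)` gives `x(2P) = ℓ(ℓ - 24t²)/(4t²s²)`, whose 2-adic valuation is
negative because `ℓ` is odd. On `y² = x³ + c` with `c` a 2-adic integer, a point whose
`x`-coordinate has 2-adic valuation `m < 0` has `v₂(y²) = 3m`, so the doubling formula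
`x(2Q) = 9x⁴/(4y²) - 2x` lowers the valuation to `m - 2`. Hence the points `2ᵏ • 2P` are pairwise
distinct and `P` has infinite order. Finally `((s³ + 3t)/s)³ + ((s³ - 3t)/s)³ = 2(s⁶ + 27t²)`.
-/

open WeierstrassCurve WeierstrassCurve.Affine

abbrev mordellCurve {R : Type*} [CommRing R] (c : R) : WeierstrassCurve.Affine R :=
  { a₁ := 0, a₂ := 0, a₃ := 0, a₄ := 0, a₆ := c }

namespace mordellCurve

lemma equation_iff {R : Type*} [CommRing R] {c x y : R} :
    (mordellCurve c).Equation x y ↔ y ^ 2 = x ^ 3 + c := by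
  rw [Affine.equation_iff]
  ring_nf

variable {F : Type*} [Field F] [NeZero (2 : F)] {c x y : F}

lemma nonsingular (h : y ^ 2 = x ^ 3 + c) (hy : y ≠ 0) : (mordellCurve c).Nonsingular x y := by
  refine (nonsingular_iff x y).mpr ⟨equation_iff.mpr h, Or.inr fun h' => hy ?_⟩
  exact (mul_eq_zero.mp (by linear_combination h' : (2 : F) * y = 0)).resolve_left two_ne_zero

lemma exists_add_self_eq_some [DecidableEq F] (h : (mordellCurve c).Nonsingular x y)
    (hy : y ≠ 0) :
    ∃ (x' y' : F) (h' : (mordellCurve c).Nonsingular x' y'),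
      Point.some _ _ h + Point.some _ _ h = Point.some _ _ h' ∧
        x' = 9 * x ^ 4 / (4 * y ^ 2) - 2 * x := by
  have hy' : y ≠ (mordellCurve c).negY x y := by
    intro h'
    simp only [negY, zero_mul, sub_zero] at h'
    exact hy ((mul_eq_zero.mp (by linear_combination h' : (2 : F) * y = 0)).resolve_left
      two_ne_zero)
  refine ⟨_, _, nonsingular_add h h fun hxy => hy' hxy.2, Point.add_self_of_Y_ne hy', ?_⟩
  have h4 : (4 : F) ≠ 0 := by
    rw [show (4 : F) = 2 * 2 by norm_num]
    exact mul_ne_zero two_ne_zero two_ne_zero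
  rw [addX, slope_of_Y_ne rfl hy']
  simp only [negY, zero_mul, mul_zero, add_zero, sub_zero, sub_neg_eq_add, ← two_mul]
  field_simp
  ring

end mordellCurve

section Valuation

variable {p : ℕ}

lemma ne_zero_of_padicValRat_ne_zero {q : ℚ} (h : padicValRat p q ≠ 0) : q ≠ 0 := by
  rintro rfl
  exact h padicValRat.zero

variable [Fact p.Prime]

lemma padicValRat_add_of_lt {q r : ℚ} (hq : q ≠ 0) (hval : padicValRat p q < padicValRat p r) :
    padicValRat p (q + r) = padicValRat p q := by
  rcases eq_or_ne r 0 with rfl | hr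
  · rw [add_zero]
  refine padicValRat.add_eq_of_lt (fun hqr => ?_) hq hr hval
  rw [eq_neg_of_add_eq_zero_right hqr, padicValRat.neg] at hval
  exact lt_irrefl _ hval

lemma padicValRat_sq_of_mordell {c x y : ℚ} (hc : 0 ≤ padicValRat p c)
    (hx : padicValRat p x < 0) (h : y ^ 2 = x ^ 3 + c) :
    padicValRat p (y ^ 2) = 3 * padicValRat p x := by
  have hx₀ : x ≠ 0 := ne_zero_of_padicValRat_ne_zero hx.ne
  rw [h, padicValRat_add_of_lt (pow_ne_zero 3 hx₀) (by rw [padicValRat.pow]; push_cast; omega),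
    padicValRat.pow]
  push_cast
  ring

end Valuation

lemma padicValRat_two_two : padicValRat 2 2 = 1 := padicValRat.self one_lt_two

lemma padicValRat_two_four : padicValRat 2 4 = 2 := by
  rw [show (4 : ℚ) = 2 ^ 2 by norm_num, padicValRat.pow, padicValRat_two_two]; rfl

lemma padicValRat_two_odd_div_four_mul_sq_neg {a b : ℤ} (ha : Odd a) (hb : b ≠ 0) :
    padicValRat 2 (a / (4 * b ^ 2)) < 0 := by
  have ha₂ : ¬(2 : ℤ) ∣ a := fun h => Int.not_even_iff_odd.mpr ha (even_iff_two_dvd.mpr h)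
  have ha₀ : (a : ℚ) ≠ 0 := Int.cast_ne_zero.mpr fun h => ha₂ (h ▸ dvd_zero 2)
  have hb₀ : (b : ℚ) ≠ 0 := Int.cast_ne_zero.mpr hb
  rw [padicValRat.div ha₀ (by positivity), padicValRat.mul (by norm_num) (by positivity),
    padicValRat.pow, padicValRat_two_four, padicValRat.of_int, padicValRat.of_int,
    padicValInt.eq_zero_of_not_dvd ha₂]
  have : 0 ≤ (padicValInt 2 b : ℤ) := Int.natCast_nonneg _
  omega

lemma padicValRat_two_mordell_double {c x y : ℚ} (hc : 0 ≤ padicValRat 2 c)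
    (hx : padicValRat 2 x < 0) (h : y ^ 2 = x ^ 3 + c) :
    padicValRat 2 (9 * x ^ 4 / (4 * y ^ 2) - 2 * x) = padicValRat 2 x - 2 := by
  have hy2 := padicValRat_sq_of_mordell hc hx h
  have hx₀ : x ≠ 0 := ne_zero_of_padicValRat_ne_zero hx.ne
  have hy₀ : y ^ 2 ≠ 0 := ne_zero_of_padicValRat_ne_zero (p := 2) (by omega)
  have h9 : padicValRat 2 9 = 0 := by
    rw [show (9 : ℚ) = ((9 : ℕ) : ℚ) by norm_num, padicValRat.of_nat,
      padicValNat.eq_zero_of_not_dvd (by norm_num)]; rfl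
  have hfrac : padicValRat 2 (9 * x ^ 4 / (4 * y ^ 2)) = padicValRat 2 x - 2 := by
    rw [padicValRat.div (by positivity) (by positivity),
      padicValRat.mul (by norm_num) (by positivity), padicValRat.mul (by norm_num) hy₀,
      padicValRat.pow, padicValRat_two_four, h9, hy2]
    push_cast
    ring
  have hlin : padicValRat 2 (-(2 * x)) = padicValRat 2 x + 1 := by
    rw [padicValRat.neg, padicValRat.mul two_ne_zero hx₀, padicValRat_two_two, add_comm]
  rw [sub_eq_add_neg, padicValRat_add_of_lt (by positivity) (by omega), hfrac]

namespace mordellCurve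

variable {c : ℚ} (hc : 0 ≤ padicValRat 2 c)
include hc

lemma exists_two_pow_nsmul_eq_some {x y : ℚ} (h : (mordellCurve c).Nonsingular x y)
    (hx : padicValRat 2 x < 0) (k : ℕ) :
    ∃ (x' y' : ℚ) (h' : (mordellCurve c).Nonsingular x' y'),
      2 ^ k • Point.some _ _ h = Point.some _ _ h' ∧
        padicValRat 2 x' = padicValRat 2 x - 2 * k := by
  induction k with
  | zero => exact ⟨x, y, h, one_nsmul _, by simp⟩
  | succ k ih =>
    obtain ⟨x', y', h', hk, hx'⟩ := ih
    have heq : y' ^ 2 = x' ^ 3 + c := equation_iff.mp h'.1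
    have hx'neg : padicValRat 2 x' < 0 := by omega
    have hy' : y' ≠ 0 := by
      rintro rfl
      have := padicValRat_sq_of_mordell hc hx'neg heq
      rw [zero_pow two_ne_zero, padicValRat.zero] at this
      omega
    obtain ⟨x'', y'', h'', hdouble, rfl⟩ := exists_add_self_eq_some h' hy'
    refine ⟨_, y'', h'', ?_, ?_⟩
    · rw [pow_succ, mul_nsmul, hk, two_nsmul, hdouble]
    · rw [padicValRat_two_mordell_double hc hx'neg heq, hx']
      push_cast
      ring

theorem not_isOfFinAddOrder_some {x y : ℚ} (h : (mordellCurve c).Nonsingular x y)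
    (hx : padicValRat 2 x < 0) : ¬IsOfFinAddOrder (Point.some _ _ h) := by
  intro hfin
  have hinj : Function.Injective fun k : ℕ => 2 ^ k • Point.some _ _ h := by
    intro k₁ k₂ hk
    obtain ⟨x₁, y₁, h₁, e₁, v₁⟩ := exists_two_pow_nsmul_eq_some hc h hx k₁
    obtain ⟨x₂, y₂, h₂, e₂, v₂⟩ := exists_two_pow_nsmul_eq_some hc h hx k₂
    simp only [e₁, e₂, Point.some.injEq] at hk
    rw [hk.1] at v₁
    omega
  exact Set.infinite_of_injective_forall_mem hinj
    (fun k => (AddSubmonoid.mem_multiples_iff _ _).mpr ⟨2 ^ k, rfl⟩) hfin.finite_multiples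

theorem not_isOfFinAddOrder_some_of_odd {ℓ s t : ℤ} (hℓ : Odd ℓ) (hs : s ≠ 0) (ht : t ≠ 0)
    (h : (mordellCurve c).Nonsingular (3 * (ℓ : ℚ) / (s : ℚ) ^ 2)
      (27 * (t : ℚ) * (ℓ : ℚ) / (s : ℚ) ^ 3)) :
    ¬IsOfFinAddOrder (Point.some _ _ h) := by
  have hℓ₀ : (ℓ : ℚ) ≠ 0 := Int.cast_ne_zero.mpr fun h => by simp [h] at hℓ
  have hy : 27 * (t : ℚ) * (ℓ : ℚ) / (s : ℚ) ^ 3 ≠ 0 := by positivity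
  obtain ⟨x', y', h₂, hdouble, hx'⟩ := exists_add_self_eq_some h hy
  have hx'_eq : x' = ((ℓ * (ℓ - 24 * t ^ 2) : ℤ) : ℚ) / (4 * ((t * s : ℤ) : ℚ) ^ 2) := by
    rw [hx']
    push_cast
    field_simp
    ring
  have hodd : Odd (ℓ * (ℓ - 24 * t ^ 2)) := hℓ.mul (hℓ.sub_even ⟨12 * t ^ 2, by ring⟩)
  have h₂_inf := not_isOfFinAddOrder_some hc h₂
    (hx'_eq ▸ padicValRat_two_odd_div_four_mul_sq_neg hodd (mul_ne_zero ht hs))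
  exact fun hfin => h₂_inf (hdouble ▸ hfin.add hfin)

end mordellCurve

lemma ne_zero_of_prime_eq_pow_six_add {ℓ : ℕ} (hℓ : ℓ.Prime) {s t : ℤ}
    (hst : (ℓ : ℤ) = s ^ 6 + 27 * t ^ 2) : t ≠ 0 := by
  rintro rfl
  have hℓs : ℓ = s.natAbs ^ 6 := by simpa [Int.natAbs_pow] using congrArg Int.natAbs hst
  exact Nat.Prime.not_prime_pow (by norm_num) (hℓs ▸ hℓ)

/-- For a prime `ℓ = s⁶ + 27t²` (with `s ≠ 0`) the point `(3ℓ/s², 27tℓ/s³)` on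
`y² = x³ - 27ℓ²` has infinite order, so the curve has positive Mordell–Weil rank over `ℚ`;
consequently `2ℓ` is a sum of two rational cubes. -/
theorem stmt15 (ℓ : ℕ) (hℓ : ℓ.Prime) (s t : ℤ) (hs : s ≠ 0)
    (hst : (ℓ : ℤ) = s ^ 6 + 27 * t ^ 2)
    (W : WeierstrassCurve.Affine ℚ)
    (hW : W = { a₁ := 0, a₂ := 0, a₃ := 0, a₄ := 0, a₆ := -27 * (ℓ : ℚ) ^ 2 }) :
    (∃ h : WeierstrassCurve.Affine.Nonsingular W (3 * (ℓ : ℚ) / (s : ℚ) ^ 2)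
        (27 * (t : ℚ) * (ℓ : ℚ) / (s : ℚ) ^ 3),
        addOrderOf (WeierstrassCurve.Affine.Point.some _ _ h) = 0) ∧
      (∃ f : ℤ →+ WeierstrassCurve.Affine.Point W, Function.Injective f) ∧
      ∃ x y : ℚ, x ^ 3 + y ^ 3 = 2 * (ℓ : ℚ) := by
  subst hW
  have ht : t ≠ 0 := ne_zero_of_prime_eq_pow_six_add hℓ hst
  have hℓ_odd : Odd (ℓ : ℤ) := by
    have : 0 < s ^ 6 := Even.pow_pos (by decide) hs
    have : 0 < t ^ 2 := Even.pow_pos (by decide) ht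
    exact_mod_cast hℓ.odd_of_ne_two (by omega)
  have hℓQ : (ℓ : ℚ) = s ^ 6 + 27 * t ^ 2 := by exact_mod_cast hst
  have hc : 0 ≤ padicValRat 2 (-27 * (ℓ : ℚ) ^ 2) := by
    rw [show -27 * (ℓ : ℚ) ^ 2 = ((-27 * ℓ ^ 2 : ℤ) : ℚ) by push_cast; ring, padicValRat.of_int]
    positivity
  have hP : (mordellCurve (-27 * (ℓ : ℚ) ^ 2)).Nonsingular (3 * (ℓ : ℚ) / (s : ℚ) ^ 2)
      (27 * (t : ℚ) * (ℓ : ℚ) / (s : ℚ) ^ 3) :=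
    mordellCurve.nonsingular (by rw [hℓQ]; field_simp; ring)
      (by have := hℓ.ne_zero; positivity)
  have hP_inf := mordellCurve.not_isOfFinAddOrder_some_of_odd hc hℓ_odd hs ht hP
  refine ⟨⟨hP, addOrderOf_eq_zero_iff.mpr hP_inf⟩,
    ⟨zmultiplesHom _ (Point.some _ _ hP), injective_zsmul_iff_not_isOfFinAddOrder.mpr hP_inf⟩,
    (s ^ 3 + 3 * t) / s, (s ^ 3 - 3 * t) / s, ?_⟩
  rw [hℓQ]
  field_simp
  ring
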